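/- arXiv:0803.2578 — 3 statements merged into one kernel-verified Lean document; each statement's English description precedes it below -/
import Mathlib

section
/- For a finite simple graph G on an even number of vertices with degree sequence d_1, ..., d_n, the number of perfect matchings of G is at most the product over all vertices v of (deg(v)!)^(1/(2·deg(v))), with the convention that 0^(1/0) = 0 (i.e., if any vertex is isolated, the graph has no perfect matching). -/
/-!
Let `P` count the perfect matchings of an induced subgraph `G[s]`, let `d_v` be the degrees in
`G[s]` and `F k = log k! / (2k)`; we show `P ≤ ∏_v exp (F d_v)` by strong induction on `s`.
Splitting the matchings according to the partner `u` of a fixed vertex `v` gives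
`P = ∑_u P_{v,u}`, with `P_{v,u}` the count for `G[s \ {v, u}]`, and convexity of `x log x`
turns this into `P^P ≤ ∏_M d_v P_{v,M v}`. Multiplying over `v` and exchanging the products,
it suffices to bound `∏_v d_v P_{v,M v}` for each matching `M`. After the induction hypothesis
and regrouping by vertex, the factor of `w` is `d_w ∏_v exp (F (d_w - δ_v))`, where
`δ_v ∈ {0, 1, 2}` counts the neighbours of `w` among `v, M v` and `∑_v δ_v = 2 (d_w - 1)`.
Concavity of `F` (which comes from `log k! + k/2 ≤ k log (k + 1)`) bounds this by
`exp (F d_w) ^ |s|`, the identity `log d + log (d - 1)! = log d!` closing the computation.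
-/

open Finset Real
open scoped Nat

noncomputable def logRootFactorial (k : ℕ) : ℝ := log (k ! : ℝ) / (2 * k)

theorem two_mul_logRootFactorial (k : ℕ) : 2 * k * logRootFactorial k = log (k ! : ℝ) := by
  rcases k.eq_zero_or_pos with rfl | hk
  · simp
  · rw [logRootFactorial, mul_div_cancel₀]; positivity

theorem exp_logRootFactorial (k : ℕ) :
    exp (logRootFactorial k) = (k ! : ℝ) ^ (1 / (2 * (k : ℝ))) := by
  rw [rpow_def_of_pos (by positivity), logRootFactorial, mul_one_div]

theorem log_factorial_succ (k : ℕ) : log ((k + 1)! : ℝ) = log (k + 1 : ℝ) + log (k ! : ℝ) := by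
  push_cast [Nat.factorial_succ]
  exact log_mul (by positivity) (by positivity)

theorem log_succ_le_log_add_inv {x : ℝ} (hx : 0 < x) : log (x + 1) ≤ log x + 1 / x := by
  have := log_le_sub_one_of_pos (show 0 < (x + 1) / x by positivity)
  rw [log_div (by positivity) hx.ne', add_div, div_self hx.ne'] at this
  linarith

theorem inv_succ_le_log_succ_sub_log {x : ℝ} (hx : 0 < x) :
    1 / (x + 1) ≤ log (x + 1) - log x := by
  have := log_le_sub_one_of_pos (show 0 < x / (x + 1) by positivity)
  rw [log_div hx.ne' (by positivity)] at this
  have : x / (x + 1) - 1 = -(1 / (x + 1)) := by field_simp; ring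
  linarith

theorem log_factorial_add_half_le (j : ℕ) : log (j ! : ℝ) + j / 2 ≤ j * log (j + 1) := by
  induction j with
  | zero => simp
  | succ j ih =>
    have hhalf : (1 : ℝ) / 2 ≤ (j + 1) * (log (j + 1 + 1) - log (j + 1)) :=
      calc (1 : ℝ) / 2 ≤ (j + 1) * (1 / (j + 1 + 1)) := by
            rw [mul_one_div, le_div_iff₀ (by positivity)]; linarith [j.cast_nonneg (α := ℝ)]
        _ ≤ _ := by gcongr; exact inv_succ_le_log_succ_sub_log (by positivity)
    rw [log_factorial_succ]
    push_cast
    linarith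

theorem logRootFactorial_add_le (j : ℕ) (hj : 1 ≤ j) :
    logRootFactorial j + logRootFactorial (j + 2) ≤ 2 * logRootFactorial (j + 1) := by
  have hJ : (1 : ℝ) ≤ j := by exact_mod_cast hj
  set a := log (j ! : ℝ)
  set b := log ((j : ℝ) + 1)
  set c := log ((j : ℝ) + 1 + 1)
  have h1 : log ((j + 1)! : ℝ) = a + b := by rw [log_factorial_succ]; ring
  have h2 : log ((j + 2)! : ℝ) = a + b + c := by rw [log_factorial_succ, h1]; push_cast; ring
  have ha : 2 * a + j ≤ 2 * j * b := by linarith [log_factorial_add_half_le j]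
  have hc : c ≤ b + 1 / (j + 1) := log_succ_le_log_add_inv (by positivity)
  have hc' : (j ^ 2 + j) * c ≤ (j ^ 2 + j) * b + j := by
    calc (j ^ 2 + j) * c ≤ (j ^ 2 + j) * (b + 1 / (j + 1)) := by gcongr
      _ = _ := by field_simp
  simp only [logRootFactorial, h1, h2]
  push_cast
  rw [div_add_div _ _ (by positivity) (by positivity), mul_div_assoc',
    div_le_div_iff₀ (by positivity) (by positivity)]
  nlinarith

theorem logRootFactorial_le_chord {c x δ : ℕ} (hx : 1 ≤ x) (hδ : δ ≤ 2) (hxδ : x + δ = c + 1) :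
    logRootFactorial x ≤
      logRootFactorial (c + 1) - δ * (logRootFactorial (c + 1) - logRootFactorial c) := by
  obtain ⟨rfl, rfl⟩ | ⟨rfl, rfl⟩ | ⟨rfl, rfl⟩ : (δ = 0 ∧ x = c + 1) ∨ (δ = 1 ∧ x = c) ∨
      (δ = 2 ∧ c = x + 1) := by omega
  · simp
  · simp
  · push_cast; linarith [logRootFactorial_add_le x hx]

theorem log_add_sum_logRootFactorial_le {ι : Type*} (T : Finset ι) (x δ : ι → ℕ) (c : ℕ)
    (hx : ∀ i ∈ T, 1 ≤ x i) (hδ : ∀ i ∈ T, δ i ≤ 2) (hxδ : ∀ i ∈ T, x i + δ i = c + 1)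
    (hδsum : ∑ i ∈ T, δ i = 2 * c) :
    log (c + 1 : ℝ) + ∑ i ∈ T, logRootFactorial (x i) ≤ (#T + 2) * logRootFactorial (c + 1) := by
  have hchord : ∑ i ∈ T, logRootFactorial (x i) ≤ ∑ i ∈ T, (logRootFactorial (c + 1) -
      δ i * (logRootFactorial (c + 1) - logRootFactorial c)) :=
    sum_le_sum fun i hi => logRootFactorial_le_chord (hx i hi) (hδ i hi) (hxδ i hi)
  have hfac : log (c + 1 : ℝ) + 2 * c * logRootFactorial c =
      2 * (c + 1) * logRootFactorial (c + 1) := by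
    rw [two_mul_logRootFactorial, ← Nat.cast_succ, two_mul_logRootFactorial, log_factorial_succ]
    push_cast; ring
  rw [sum_sub_distrib, sum_const, nsmul_eq_mul, ← sum_mul, ← Nat.cast_sum, hδsum] at hchord
  push_cast at hchord
  linarith

theorem sum_mul_log_sum_le {ι : Type*} {B : Finset ι} {t : ι → ℝ} (ht : ∀ i ∈ B, 0 ≤ t i) :
    (∑ i ∈ B, t i) * log (∑ i ∈ B, t i) ≤
      (∑ i ∈ B, t i) * log #B + ∑ i ∈ B, t i * log (t i) := by
  rcases B.eq_empty_or_nonempty with rfl | hB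
  · simp
  set S := ∑ i ∈ B, t i
  have hr : (0 : ℝ) < #B := by exact_mod_cast hB.card_pos
  have hjensen := convexOn_mul_log.map_sum_le (t := B) (w := fun _ => (#B : ℝ)⁻¹) (p := t)
    (fun _ _ => by positivity) (by simp [hr.ne']) ht
  simp only [smul_eq_mul, ← mul_sum] at hjensen
  have hS : S * log ((#B : ℝ)⁻¹ * S) = S * log S - S * log #B := by
    rcases (sum_nonneg ht).eq_or_lt with h | h
    · simp [S, ← h]
    · rw [log_mul (by positivity) h.ne', log_inv]; ring
  have := mul_le_mul_of_nonneg_left hjensen hr.le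
  rw [← mul_assoc, mul_inv_cancel_left₀ hr.ne', mul_inv_cancel_left₀ hr.ne', hS] at this
  linarith

theorem natCast_pow_self_eq_exp (n : ℕ) : (n : ℝ) ^ n = exp (n * log n) := by
  rcases n.eq_zero_or_pos with rfl | hn
  · simp
  · rw [← log_pow, exp_log (by positivity)]

theorem pow_sum_le_card_pow_mul_prod_pow {ι : Type*} (B : Finset ι) (t : ι → ℕ) :
    ((∑ i ∈ B, t i : ℕ) : ℝ) ^ (∑ i ∈ B, t i) ≤
      (#B : ℝ) ^ (∑ i ∈ B, t i) * ∏ i ∈ B, (t i : ℝ) ^ t i := by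
  rcases B.eq_empty_or_nonempty with rfl | hB
  · simp
  have hr : (0 : ℝ) < #B := by exact_mod_cast hB.card_pos
  calc _ = exp ((∑ i ∈ B, t i : ℕ) * log (∑ i ∈ B, t i : ℕ)) := natCast_pow_self_eq_exp _
    _ ≤ exp ((∑ i ∈ B, t i : ℕ) * log #B + ∑ i ∈ B, t i * log (t i)) := by
      push_cast
      gcongr
      exact sum_mul_log_sum_le fun i _ => (t i).cast_nonneg
    _ = _ := by
      rw [exp_add, exp_sum, ← log_pow, exp_log (pow_pos hr _)]
      simp only [natCast_pow_self_eq_exp]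

namespace SimpleGraph

variable {V : Type*} (G : SimpleGraph V)

/-- A perfect matching of `G[s]`, recorded as the involution exchanging matched vertices and
fixing every vertex outside `s`. -/
structure IsMatchingInvolution (s : Finset V) (m : V → V) : Prop where
  involutive : Function.Involutive m
  adj : ∀ v ∈ s, G.Adj v (m v)
  eq_self : ∀ v ∉ s, m v = v

open Classical in
noncomputable def matchingInvolutions [Fintype V] (s : Finset V) : Finset (V → V) :=
  {m | G.IsMatchingInvolution s m}

def degreeOn [DecidableRel G.Adj] (s : Finset V) (w : V) : ℕ := #{u ∈ s | G.Adj w u}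

variable {G} {s : Finset V} {m : V → V}

theorem mem_matchingInvolutions [Fintype V] :
    m ∈ G.matchingInvolutions s ↔ G.IsMatchingInvolution s m := by
  simp [matchingInvolutions]

namespace IsMatchingInvolution

theorem apply_mem (hm : G.IsMatchingInvolution s m) {v : V} (hv : v ∈ s) : m v ∈ s := by
  by_contra h
  have := hm.eq_self _ h
  rw [hm.involutive v] at this
  exact (hm.adj v hv).ne this

theorem degreeOn_pos [DecidableRel G.Adj] (hm : G.IsMatchingInvolution s m) {w : V} (hw : w ∈ s) :
    0 < G.degreeOn s w :=
  card_pos.mpr ⟨m w, mem_filter.mpr ⟨hm.apply_mem hw, hm.adj w hw⟩⟩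

theorem apply_mem_filter_adj [DecidableRel G.Adj] (hm : G.IsMatchingInvolution s m) {v : V}
    (hv : v ∈ s) : m v ∈ {u ∈ s | G.Adj v u} :=
  mem_filter.mpr ⟨hm.apply_mem hv, hm.adj v hv⟩

variable [DecidableEq V]

theorem apply_mem_pair_iff (hm : G.IsMatchingInvolution s m) {v w : V} :
    m v ∈ ({w, m w} : Finset V) ↔ v ∈ ({w, m w} : Finset V) := by
  have := hm.involutive
  simp only [mem_insert, mem_singleton]
  grind [Function.Involutive]

theorem mem_pair_comm (hm : G.IsMatchingInvolution s m) {v w : V} :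
    w ∈ ({v, m v} : Finset V) ↔ v ∈ ({w, m w} : Finset V) := by
  have := hm.involutive
  simp only [mem_insert, mem_singleton]
  grind [Function.Involutive]

theorem pair_subset (hm : G.IsMatchingInvolution s m) {v : V} (hv : v ∈ s) :
    {v, m v} ⊆ s := by
  simp [insert_subset_iff, hv, hm.apply_mem hv]

theorem apply_mem_sdiff_pair (hm : G.IsMatchingInvolution s m) {v w : V}
    (hv : v ∈ s \ {w, m w}) : m v ∈ s \ {w, m w} := by
  rw [mem_sdiff] at hv ⊢
  exact ⟨hm.apply_mem hv.1, hm.apply_mem_pair_iff.not.mpr hv.2⟩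

theorem sdiff_pair (hm : G.IsMatchingInvolution s m) {v : V} (hv : v ∈ s) :
    G.IsMatchingInvolution (s \ {v, m v}) (Equiv.swap v (m v) ∘ m) := by
  have hmv := hm.apply_mem hv
  obtain ⟨hinv, hadj, hself⟩ := hm
  refine ⟨fun x => ?_, fun x hx => ?_, fun x hx => ?_⟩ <;>
    simp only [mem_sdiff, mem_insert, mem_singleton, Function.comp_apply,
      Equiv.swap_apply_def] at * <;>
    grind [Function.Involutive]

theorem of_sdiff_pair {m' : V → V} {v u : V} (hm' : G.IsMatchingInvolution (s \ {v, u}) m')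
    (hv : v ∈ s) (hu : u ∈ s) (hvu : G.Adj v u) :
    G.IsMatchingInvolution s (Equiv.swap v u ∘ m') := by
  obtain ⟨hinv, hadj, hself⟩ := hm'
  refine ⟨fun x => ?_, fun x hx => ?_, fun x hx => ?_⟩ <;>
    simp only [mem_sdiff, mem_insert, mem_singleton, Function.comp_apply,
      Equiv.swap_apply_def] at * <;>
    grind [Function.Involutive, hvu.symm]

end IsMatchingInvolution

section Recursion

variable [Fintype V] [DecidableEq V]

theorem card_filter_apply_eq {v u : V} (hv : v ∈ s) (hu : u ∈ s) (hvu : G.Adj v u) :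
    #{m ∈ G.matchingInvolutions s | m v = u} = #(G.matchingInvolutions (s \ {v, u})) := by
  refine card_nbij' (Equiv.swap v u ∘ ·) (Equiv.swap v u ∘ ·) ?_ ?_ ?_ ?_
  · intro m hm
    rw [mem_coe, mem_filter, mem_matchingInvolutions] at hm
    obtain ⟨hm, rfl⟩ := hm
    exact mem_matchingInvolutions.mpr (hm.sdiff_pair hv)
  · intro m' hm'
    have hm' := mem_matchingInvolutions.mp hm'
    simpa [mem_matchingInvolutions, hm'.eq_self v (by simp)] using hm'.of_sdiff_pair hv hu hvu
  all_goals intro m _; ext; simp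

variable [DecidableRel G.Adj]

theorem card_matchingInvolutions_eq_sum {v : V} (hv : v ∈ s) :
    #(G.matchingInvolutions s) =
      ∑ u ∈ {u ∈ s | G.Adj v u}, #(G.matchingInvolutions (s \ {v, u})) := by
  rw [card_eq_sum_card_fiberwise fun _ hm => (mem_matchingInvolutions.mp hm).apply_mem_filter_adj hv]
  refine sum_congr rfl fun u hu => ?_
  rw [mem_filter] at hu
  exact card_filter_apply_eq hv hu.1 hu.2

theorem prod_matchingInvolutions_apply {M : Type*} [CommMonoid M] (f : V → M) {v : V} (hv : v ∈ s) :
    ∏ m ∈ G.matchingInvolutions s, f (m v) =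
      ∏ u ∈ {u ∈ s | G.Adj v u}, f u ^ #(G.matchingInvolutions (s \ {v, u})) := by
  rw [← prod_fiberwise_of_maps_to fun _ hm => (mem_matchingInvolutions.mp hm).apply_mem_filter_adj hv]
  refine prod_congr rfl fun u hu => ?_
  rw [mem_filter] at hu
  rw [← card_filter_apply_eq hv hu.1 hu.2, ← prod_const]
  exact prod_congr rfl fun m hm => by rw [(mem_filter.mp hm).2]

end Recursion

section Degrees

variable [DecidableEq V] [DecidableRel G.Adj]

theorem degreeOn_sdiff_add_degreeOn {t : Finset V} (h : t ⊆ s) (w : V) :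
    G.degreeOn (s \ t) w + G.degreeOn t w = G.degreeOn s w := by
  rw [degreeOn, degreeOn, degreeOn, ← card_union_of_disjoint
    (disjoint_filter_filter sdiff_disjoint), ← filter_union, sdiff_union_of_subset h]

theorem degreeOn_pair_le (v u w : V) : G.degreeOn {v, u} w ≤ 2 :=
  (card_filter_le _ _).trans card_le_two

namespace IsMatchingInvolution

theorem sum_degreeOn_pair (hm : G.IsMatchingInvolution s m) {w : V} (hw : w ∈ s) :
    ∑ v ∈ s \ {w, m w}, G.degreeOn {v, m v} w + 2 = 2 * G.degreeOn s w := by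
  set T := s \ {w, m w}
  have hsplit : ∀ v ∈ T, G.degreeOn {v, m v} w =
      (if G.Adj w v then 1 else 0) + if G.Adj w (m v) then 1 else 0 := fun v hv => by
    rw [degreeOn, card_filter, sum_pair (hm.adj v (mem_sdiff.mp hv).1).ne]
  have hmT : ∑ v ∈ T, (if G.Adj w (m v) then 1 else 0) = ∑ v ∈ T, if G.Adj w v then 1 else 0 :=
    sum_nbij' m m (fun _ hv => hm.apply_mem_sdiff_pair hv) (fun _ hv => hm.apply_mem_sdiff_pair hv)
      (fun v _ => hm.involutive v) (fun v _ => hm.involutive v) fun _ _ => rfl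
  have hpair : G.degreeOn {w, m w} w = 1 := by
    rw [degreeOn, filter_insert, if_neg (G.loopless.irrefl w), filter_singleton,
      if_pos (hm.adj w hw), card_singleton]
  rw [sum_congr rfl hsplit, sum_add_distrib, hmT, ← card_filter, ← degreeOn,
    ← degreeOn_sdiff_add_degreeOn (hm.pair_subset hw) w, hpair]
  ring

theorem degreeOn_mul_prod_exp_le (hm : G.IsMatchingInvolution s m) {w : V} (hw : w ∈ s) :
    (G.degreeOn s w : ℝ) *
        ∏ v ∈ s \ {w, m w}, exp (logRootFactorial (G.degreeOn (s \ {v, m v}) w)) ≤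
      exp (logRootFactorial (G.degreeOn s w)) ^ #s := by
  obtain ⟨c, hc⟩ := Nat.exists_eq_add_one.mpr (hm.degreeOn_pos hw)
  have hcard : #s = #(s \ {w, m w}) + 2 := by
    rw [← card_sdiff_add_card_eq_card (hm.pair_subset hw), card_pair (hm.adj w hw).ne]
  have hpos : ∀ v ∈ s \ {w, m w}, 1 ≤ G.degreeOn (s \ {v, m v}) w := fun v hv => by
    have hw' : w ∈ s \ {v, m v} := mem_sdiff.mpr ⟨hw, hm.mem_pair_comm.not.mpr (mem_sdiff.mp hv).2⟩
    exact (hm.sdiff_pair (mem_sdiff.mp hv).1).degreeOn_pos hw'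
  have key := log_add_sum_logRootFactorial_le (s \ {w, m w})
    (fun v => G.degreeOn (s \ {v, m v}) w) (fun v => G.degreeOn {v, m v} w) c hpos
    (fun v _ => degreeOn_pair_le v (m v) w)
    (fun v hv => hc ▸ degreeOn_sdiff_add_degreeOn (hm.pair_subset (mem_sdiff.mp hv).1) w)
    (by have := hm.sum_degreeOn_pair hw; omega)
  rw [hc, hcard, ← exp_log (by positivity : (0 : ℝ) < (c + 1 : ℕ)), ← exp_sum, ← exp_add,
    ← exp_nat_mul]
  gcongr
  push_cast
  exact key

end IsMatchingInvolution

end Degrees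

section Bound

variable [Fintype V] [DecidableEq V] [DecidableRel G.Adj]

theorem pow_card_matchingInvolutions_le {v : V} (hv : v ∈ s) :
    (#(G.matchingInvolutions s) : ℝ) ^ #(G.matchingInvolutions s) ≤
      ∏ m ∈ G.matchingInvolutions s,
        (G.degreeOn s v * #(G.matchingInvolutions (s \ {v, m v})) : ℝ) := by
  rw [prod_mul_distrib, prod_const,
    prod_matchingInvolutions_apply (fun u => (#(G.matchingInvolutions (s \ {v, u})) : ℝ)) hv]
  rw [card_matchingInvolutions_eq_sum hv]
  exact pow_sum_le_card_pow_mul_prod_pow _ _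

theorem prod_degreeOn_mul_card_le
    (ih : ∀ t ⊂ s, (#(G.matchingInvolutions t) : ℝ) ≤
      ∏ w ∈ t, exp (logRootFactorial (G.degreeOn t w)))
    (hm : G.IsMatchingInvolution s m) :
    ∏ v ∈ s, (G.degreeOn s v * #(G.matchingInvolutions (s \ {v, m v})) : ℝ) ≤
      (∏ w ∈ s, exp (logRootFactorial (G.degreeOn s w))) ^ #s :=
  calc _ ≤ ∏ v ∈ s, (G.degreeOn s v *
          ∏ w ∈ s \ {v, m v}, exp (logRootFactorial (G.degreeOn (s \ {v, m v}) w)) : ℝ) := by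
        gcongr with v hv
        exact ih _ (sdiff_ssubset (hm.pair_subset hv) (insert_nonempty _ _))
    _ = ∏ w ∈ s, (G.degreeOn s w *
          ∏ v ∈ s \ {w, m w}, exp (logRootFactorial (G.degreeOn (s \ {v, m v}) w)) : ℝ) := by
        rw [prod_mul_distrib, prod_mul_distrib, prod_comm' fun v w => ?_]
        simp only [mem_sdiff, hm.mem_pair_comm]
        tauto
    _ ≤ ∏ w ∈ s, exp (logRootFactorial (G.degreeOn s w)) ^ #s :=
        prod_le_prod (fun _ _ => by positivity) fun _ hw => hm.degreeOn_mul_prod_exp_le hw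
    _ = _ := prod_pow _ _ _

theorem card_matchingInvolutions_le_prod_exp (s : Finset V) :
    (#(G.matchingInvolutions s) : ℝ) ≤ ∏ w ∈ s, exp (logRootFactorial (G.degreeOn s w)) := by
  induction s using Finset.strongInduction with | H s ih => ?_
  rcases s.eq_empty_or_nonempty with rfl | hs
  · have : #(G.matchingInvolutions ∅) ≤ 1 := card_le_one.mpr fun a ha b hb => funext fun x =>
      ((mem_matchingInvolutions.mp ha).eq_self x (notMem_empty x)).trans
        ((mem_matchingInvolutions.mp hb).eq_self x (notMem_empty x)).symm
    simpa using (Nat.cast_le (α := ℝ)).mpr this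
  set P := #(G.matchingInvolutions s)
  set R := ∏ w ∈ s, exp (logRootFactorial (G.degreeOn s w))
  rcases Nat.eq_zero_or_pos P with hP | hP
  · rw [hP, Nat.cast_zero]
    positivity
  have hpow : (P : ℝ) ^ (#s * P) ≤ R ^ (#s * P) :=
    calc (P : ℝ) ^ (#s * P) = ∏ _ ∈ s, (P : ℝ) ^ P := by rw [prod_const, pow_mul']
      _ ≤ ∏ v ∈ s, ∏ m ∈ G.matchingInvolutions s,
            (G.degreeOn s v * #(G.matchingInvolutions (s \ {v, m v})) : ℝ) :=
          prod_le_prod (fun _ _ => by positivity) fun _ hv => pow_card_matchingInvolutions_le hv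
      _ = ∏ m ∈ G.matchingInvolutions s, ∏ v ∈ s,
            (G.degreeOn s v * #(G.matchingInvolutions (s \ {v, m v})) : ℝ) := prod_comm
      _ ≤ ∏ _ ∈ G.matchingInvolutions s, R ^ #s :=
          prod_le_prod (fun _ _ => by positivity) fun _ hm =>
            prod_degreeOn_mul_card_le ih (mem_matchingInvolutions.mp hm)
      _ = R ^ (#s * P) := by rw [prod_const, ← pow_mul, mul_comm]
  exact le_of_pow_le_pow_left₀ (by positivity) (by positivity) hpow

end Bound

theorem Subgraph.IsPerfectMatching.exists_isMatchingInvolution [Fintype V] {M : G.Subgraph}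
    (hM : M.IsPerfectMatching) :
    ∃ m, G.IsMatchingInvolution univ m ∧ ∀ v w, M.Adj v w ↔ m v = w := by
  have hunique := Subgraph.isPerfectMatching_iff.mp hM
  choose m hm using fun v => (hunique v).exists
  have hadj : ∀ v w, M.Adj v w ↔ m v = w := fun v w =>
    ⟨fun h => (hunique v).unique (hm v) h, fun h => h ▸ hm v⟩
  exact ⟨m, ⟨fun v => (hadj _ _).mp (hm v).symm, fun v _ => M.adj_sub (hm v),
    fun v hv => absurd (mem_univ v) hv⟩, hadj⟩

theorem card_perfectMatching_le_card_matchingInvolutions [Fintype V] :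
    Nat.card {M : G.Subgraph // M.IsPerfectMatching} ≤ #(G.matchingInvolutions univ) := by
  choose f hf hfadj using fun M : {M : G.Subgraph // M.IsPerfectMatching} =>
    M.2.exists_isMatchingInvolution
  rw [← Nat.card_eq_finsetCard]
  refine Nat.card_le_card_of_injective (fun M => ⟨f M, mem_matchingInvolutions.mpr (hf M)⟩)
    fun M₁ M₂ h => Subtype.ext (Subgraph.ext ?_ ?_)
  · rw [M₁.2.2.verts_eq_univ, M₂.2.2.verts_eq_univ]
  · have hf : f M₁ = f M₂ := congrArg Subtype.val h
    ext v w
    rw [hfadj, hfadj, hf]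

end SimpleGraph

theorem perfmat_le_prod_degree_factorial_rpow_general
    {V : Type*} [Fintype V] (G : SimpleGraph V)
    [DecidableRel G.Adj] :
    (Nat.card {M : G.Subgraph // M.IsPerfectMatching} : ℝ) ≤
      ∏ v : V, if G.degree v = 0 then (0 : ℝ)
        else ((G.degree v).factorial : ℝ) ^ (1 / (2 * (G.degree v : ℝ))) := by
  classical
  have hdeg : ∀ v, G.degreeOn univ v = G.degree v := fun v => by
    rw [SimpleGraph.degreeOn, ← G.card_neighborFinset_eq_degree, G.neighborFinset_eq_filter]
  refine (Nat.cast_le.mpr G.card_perfectMatching_le_card_matchingInvolutions).trans ?_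
  rcases (G.matchingInvolutions univ).eq_empty_or_nonempty with h | ⟨m, hm⟩
  · rw [h, card_empty, Nat.cast_zero]
    exact prod_nonneg fun v _ => by split_ifs <;> positivity
  have hm := SimpleGraph.mem_matchingInvolutions.mp hm
  refine (G.card_matchingInvolutions_le_prod_exp univ).trans_eq (prod_congr rfl fun v _ => ?_)
  rw [hdeg, if_neg (hdeg v ▸ hm.degreeOn_pos (mem_univ v)).ne', exp_logRootFactorial]

/-- The maximum number of perfect matchings in a graph with a given degree
sequence: `perfmat G ≤ ∏_v (deg(v)!)^(1/(2 deg v))`, with the convention that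
a vertex of degree `0` contributes factor `0`. -/
theorem perfmat_le_prod_degree_factorial_rpow
    {V : Type*} [Fintype V] [DecidableEq V] (G : SimpleGraph V)
    [DecidableRel G.Adj] (hV : Even (Fintype.card V)) :
    (Nat.card {M : G.Subgraph // M.IsPerfectMatching} : ℝ) ≤
      ∏ v : V, if G.degree v = 0 then (0 : ℝ)
        else ((G.degree v).factorial : ℝ) ^ (1 / (2 * (G.degree v : ℝ))) :=
  perfmat_le_prod_degree_factorial_rpow_general G
end

section
/- If a 0-1 symmetric matrix A with zero diagonal (the adjacency matrix of a simple graph G without isolated vertices), up to permutation of rows and columns, is block diagonal with each block an all-ones square matrix, then G is a disjoint union of complete balanced bipartite graphs. -/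
open Finset

/-- If the adjacency matrix of a simple graph `G` without isolated vertices is,
up to permutation of rows and columns, block diagonal with each diagonal block
a square all-ones matrix (expressed via a colouring `c` of the indices:
after permuting, there is a `1` in position `(i, j)` iff `i` and `j` have the
same colour), then every connected component of `G` is a complete balanced
bipartite graph `K_{m,m}`. -/
theorem union_completeBipartite_of_adjMatrix_blockDiagonal
    {n : ℕ} (G : SimpleGraph (Fin n)) [DecidableRel G.Adj]
    (hdeg : ∀ v, 0 < G.degree v)
    (h : ∃ (σ τ : Equiv.Perm (Fin n)) (c : Fin n → Fin n),
      ∀ i j, G.adjMatrix ℕ (σ i) (τ j) = 1 ↔ c i = c j) :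
    ∀ comp : G.ConnectedComponent, ∃ m : ℕ, 1 ≤ m ∧
      Nonempty (SimpleGraph.induce comp.supp G ≃g
        completeBipartiteGraph (Fin m) (Fin m)) := by
  classical
  obtain ⟨σ, τ, c, h⟩ := h
  set f : Fin n → Fin n := fun v => c (σ.symm v) with hf
  set g : Fin n → Fin n := fun v => c (τ.symm v) with hg
  have hAdj : ∀ u v, G.Adj u v ↔ f u = g v := by
    intro u v
    have h2 := h (σ.symm u) (τ.symm v)
    rw [SimpleGraph.adjMatrix_apply] at h2
    simp only [Equiv.apply_symm_apply] at h2
    constructor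
    · intro ha; rw [if_pos ha] at h2; exact h2.mp rfl
    · intro hc; by_contra ha; rw [if_neg ha] at h2
      exact one_ne_zero (h2.mpr hc).symm
  have hne : ∀ v, f v ≠ g v := fun v hv => G.irrefl ((hAdj v v).mpr hv)
  have pair : ∀ {u v : Fin n}, G.Walk u v →
      (f v = f u ∧ g v = g u) ∨ (f v = g u ∧ g v = f u) := by
    intro u v w
    induction w with
    | nil => exact Or.inl ⟨rfl, rfl⟩
    | @cons x y z hxy w ih =>
      have h1 : f x = g y := (hAdj x y).mp hxy
      have h2 : f y = g x := (hAdj y x).mp hxy.symm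
      rcases ih with ⟨e1, e2⟩ | ⟨e1, e2⟩
      · exact Or.inr ⟨by rw [e1, h2], by rw [e2, ← h1]⟩
      · exact Or.inl ⟨by rw [e1, ← h1], by rw [e2, h2]⟩
  intro comp
  obtain ⟨v0, hv0⟩ := comp.exists_rep
  set a := f v0 with ha
  set b := g v0 with hb
  have hab : a ≠ b := hne v0
  have memsupp : ∀ v, v ∈ comp.supp ↔ G.Reachable v0 v := by
    intro v
    rw [SimpleGraph.ConnectedComponent.mem_supp_iff, ← hv0]
    exact ⟨fun hm => (SimpleGraph.ConnectedComponent.eq.mp hm).symm,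
      fun hr => SimpleGraph.ConnectedComponent.eq.mpr hr.symm⟩
  have key1 : ∀ v ∈ comp.supp, (f v = a ∧ g v = b) ∨ (f v = b ∧ g v = a) := by
    intro v hv
    obtain ⟨w⟩ := (memsupp v).mp hv
    exact pair w
  have key2 : ∀ v, f v = a → g v = b ∧ v ∈ comp.supp := by
    intro v hva
    obtain ⟨u, hu⟩ := G.degree_pos_iff_exists_adj v |>.mp (hdeg v)
    have hgu : g u = a := ((hAdj v u).mp hu).symm.trans hva
    have huS : u ∈ comp.supp :=
      (memsupp u).mpr ((hAdj v0 u).mpr (ha.trans hgu.symm)).reachable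
    rcases key1 u huS with ⟨h1, h2⟩ | ⟨h1, h2⟩
    · exact absurd (hgu.symm.trans h2) hab
    · have hgv : g v = b := ((hAdj u v).mp hu.symm).symm.trans h1
      exact ⟨hgv, (memsupp v).mpr (((memsupp u).mp huS).trans hu.symm.reachable)⟩
  have key3 : ∀ v, g v = a → f v = b ∧ v ∈ comp.supp := by
    intro v hva
    obtain ⟨u, hu⟩ := G.degree_pos_iff_exists_adj v |>.mp (hdeg v)
    have hfu : f u = a := ((hAdj u v).mp hu.symm).trans hva
    obtain ⟨hgu, huS⟩ := key2 u hfu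
    have hfv : f v = b := ((hAdj v u).mp hu).trans hgu
    exact ⟨hfv, (memsupp v).mpr (((memsupp u).mp huS).trans hu.symm.reachable)⟩
  have memiff : ∀ v, v ∈ comp.supp ↔ (f v = a ∨ g v = a) := by
    intro v
    constructor
    · intro hv
      rcases key1 v hv with ⟨h1, _⟩ | ⟨_, h2⟩
      · exact Or.inl h1
      · exact Or.inr h2
    · rintro (hv | hv)
      · exact (key2 v hv).2
      · exact (key3 v hv).2
  have eσ : {i // c i = a} ≃ {v // f v = a} :=
    σ.subtypeEquiv (by intro i; simp [hf])
  have eτ : {i // c i = a} ≃ {v // g v = a} :=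
    τ.subtypeEquiv (by intro i; simp [hg])
  set m := Fintype.card {v : Fin n // g v = a} with hm
  have hcard : Fintype.card {v : Fin n // f v = a} = m :=
    Fintype.card_congr (eσ.symm.trans eτ)
  have hm1 : 1 ≤ m := by
    rw [← hcard]
    exact Fintype.card_pos_iff.mpr ⟨⟨v0, ha.symm⟩⟩
  let e1 : {x : Fin n // x ∈ comp.supp} ≃ {v // f v = a} ⊕ {v // g v = a} :=
    { toFun := fun v => if hv : f v.1 = a then Sum.inl ⟨v.1, hv⟩
        else Sum.inr ⟨v.1, ((memiff v.1).mp v.2).resolve_left hv⟩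
      invFun := Sum.elim (fun x => ⟨x.1, (key2 x.1 x.2).2⟩)
        (fun x => ⟨x.1, (key3 x.1 x.2).2⟩)
      left_inv := by
        intro v
        by_cases hv : f v.1 = a <;> simp [hv]
      right_inv := by
        rintro (⟨v, hv⟩ | ⟨v, hv⟩)
        · simp [hv]
        · have hfv : f v ≠ a := by
            rw [(key3 v hv).1]; exact fun hba => hab hba.symm
          simp [hfv] }
  have eL : {v // f v = a} ≃ Fin m := Fintype.equivFinOfCardEq hcard
  have eR : {v // g v = a} ≃ Fin m := Fintype.equivFinOfCardEq rfl
  refine ⟨m, hm1, ⟨⟨e1.trans (Equiv.sumCongr eL eR), ?_⟩⟩⟩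
  intro u v
  have hAdj' : G.Adj u.1 v.1 ↔ f u.1 = g v.1 := hAdj u.1 v.1
  have hba : b ≠ a := fun e => hab e.symm
  by_cases hu : f u.1 = a <;> by_cases hv : f v.1 = a
  · have hgv : g v.1 = b := (key2 v.1 hv).1
    simp [e1, hu, hv, hAdj', hgv, hab, hab, hba, SimpleGraph.comap_adj]
  · have hgv : g v.1 = a := ((memiff v.1).mp v.2).resolve_left hv
    simp [e1, hu, hv, hAdj', hgv, hab, hba, SimpleGraph.comap_adj]
  · have hgu : g u.1 = a := ((memiff u.1).mp u.2).resolve_left hu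
    have hgv : g v.1 = b := (key2 v.1 hv).1
    have hfu : f u.1 = b := (key3 u.1 hgu).1
    simp [e1, hu, hv, hAdj', hgu, hgv, hfu, hab, hba, SimpleGraph.comap_adj]
  · have hgv : g v.1 = a := ((memiff v.1).mp v.2).resolve_left hv
    have hfu2 : f u.1 = b := (key3 u.1 (((memiff u.1).mp u.2).resolve_left hu)).1
    simp [e1, hu, hv, hAdj', hgv, hfu2, hab, hab, hba, SimpleGraph.comap_adj]
end

section
/- For a bipartite simple graph G with a perfect matching, the number of perfect matchings of G is at most Π_{x ∈ X} (deg(x)!)^(1/deg(x)) where X is one part of the bipartition; equivalently, at most Π_{v ∈ V(G)} (deg(v)!)^(1/(2 deg(v))) follows from applying this to both parts and taking the geometric mean. -/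
/-!
Schrijver's proof of Brégman's inequality. A perfect matching of `G` is a permutation `σ` with
`x_i ~ y_{σ i}` for all `i`, so the number `P` of them is the permanent of the `N × N`
biadjacency matrix, whose row sums `r_i` are the degrees of `X`. Expanding `P` along row `k`
gives `P = ∑_{c ~ k} m_{kc}` with `m_{kc}` the permanent of the minor, and convexity of
`x log x` turns this into `P^P ≤ ∏_σ r_k m_{k,σ k}`. Multiplying over all rows `k`, bounding each
minor by induction and observing that, for a fixed `σ`, the degree of row `u` drops by one in
exactly `r_u - 1` of the minors `(k, σ k)` with `k ≠ u`, one gets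
`P^{NP} ≤ (∏_i (r_i!)^{1/r_i})^{NP}`.
-/

open Finset

namespace Real

lemma rpow_self_eq_exp_mul_log {x : ℝ} (hx : 0 ≤ x) : x ^ x = exp (x * log x) := by
  rcases hx.eq_or_lt with rfl | hx
  · simp
  · rw [rpow_def_of_pos hx, mul_comm]

lemma sum_mul_log_sum_le {ι : Type*} {s : Finset ι} (hs : s.Nonempty) {t : ι → ℝ}
    (ht : ∀ i ∈ s, 0 ≤ t i) :
    (∑ i ∈ s, t i) * log (∑ i ∈ s, t i) ≤ (∑ i ∈ s, t i) * log #s + ∑ i ∈ s, t i * log (t i) := by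
  have hN : (0 : ℝ) < #s := by exact_mod_cast hs.card_pos
  have jensen := convexOn_mul_log.map_sum_le (t := s) (w := fun _ => (#s : ℝ)⁻¹) (p := t)
    (fun _ _ => by positivity) (by simp [hN.ne']) ht
  simp only [smul_eq_mul, ← mul_sum] at jensen
  have hlog : (∑ i ∈ s, t i) * log ((∑ i ∈ s, t i) / #s)
      = (∑ i ∈ s, t i) * log (∑ i ∈ s, t i) - (∑ i ∈ s, t i) * log #s := by
    rcases (sum_nonneg ht).eq_or_lt with hT | hT
    · simp [← hT]
    · rw [log_div hT.ne' hN.ne']; ring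
  rw [inv_mul_eq_div, inv_mul_eq_div, div_mul_eq_mul_div, div_le_div_iff_of_pos_right hN,
    hlog] at jensen
  linarith

lemma sum_rpow_sum_le {ι : Type*} (s : Finset ι) {t : ι → ℝ} (ht : ∀ i ∈ s, 0 ≤ t i) :
    (∑ i ∈ s, t i) ^ (∑ i ∈ s, t i) ≤ (#s : ℝ) ^ (∑ i ∈ s, t i) * ∏ i ∈ s, t i ^ t i := by
  rcases s.eq_empty_or_nonempty with rfl | hs
  · simp
  have hN : (0 : ℝ) < #s := by exact_mod_cast hs.card_pos
  rw [rpow_self_eq_exp_mul_log (sum_nonneg ht), rpow_def_of_pos hN,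
    prod_congr rfl fun i hi => rpow_self_eq_exp_mul_log (ht i hi), ← exp_sum, ← exp_add,
    exp_le_exp, mul_comm (log _)]
  exact sum_mul_log_sum_le hs ht

end Real

lemma Fin.prod_succAbove_eq_prod_erase {M : Type*} [CommMonoid M] {n : ℕ} (k : Fin (n + 1))
    (f : Fin (n + 1) → M) : ∏ i : Fin n, f (k.succAbove i) = ∏ u ∈ univ.erase k, f u := by
  refine (prod_map univ k.succAboveEmb f).symm.trans ?_
  congr 1
  ext u
  simp

noncomputable def bregmanFactor (d : ℕ) : ℝ := (d.factorial : ℝ) ^ (1 / (d : ℝ))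

lemma bregmanFactor_nonneg (d : ℕ) : 0 ≤ bregmanFactor d := by
  unfold bregmanFactor
  positivity

lemma bregmanFactor_pow_self (d : ℕ) : bregmanFactor d ^ d = d.factorial := by
  rcases d.eq_zero_or_pos with rfl | hd
  · simp
  · rw [bregmanFactor, ← Real.rpow_natCast, ← Real.rpow_mul (by positivity),
      one_div_mul_cancel (by positivity), Real.rpow_one]

lemma mul_bregmanFactor_pred_pow_mul_bregmanFactor_pow {d N : ℕ} (hd : 1 ≤ d) (hdN : d ≤ N) :
    d * bregmanFactor (d - 1) ^ (d - 1) * bregmanFactor d ^ (N - d) = bregmanFactor d ^ N := by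
  rw [bregmanFactor_pow_self, ← Nat.cast_mul, Nat.mul_factorial_pred (by omega),
    ← bregmanFactor_pow_self, ← pow_add, Nat.add_sub_cancel' hdN]

lemma card_mul_prod_erase_bregmanFactor {α : Type*} [Fintype α] [DecidableEq α] {s : Finset α}
    {a : α} (ha : a ∈ s) :
    #s * ∏ c ∈ univ.erase a, bregmanFactor (if c ∈ s then #s - 1 else #s) =
      bregmanFactor #s ^ Fintype.card α := by
  have hin : (univ.erase a).filter (· ∈ s) = s.erase a := by ext; simp [and_comm]
  have hout : (univ.erase a).filter (· ∉ s) = sᶜ := by ext; aesop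
  rw [prod_apply_ite, prod_const, prod_const, hin, hout, card_erase_of_mem ha, card_compl,
    ← mul_assoc]
  exact mul_bregmanFactor_pred_pow_mul_bregmanFactor_pow (card_pos.mpr ⟨a, ha⟩) (card_le_univ s)

section Transversals

variable {n : ℕ}

/-- The permutations `σ` with `R i (σ i)` for all `i`: their number is the permanent of the
`0`-`1` matrix of `R`. -/
def transversals (R : Fin n → Fin n → Prop) [DecidableRel R] : Finset (Equiv.Perm (Fin n)) :=
  {σ | ∀ i, R i (σ i)}

def rowDegree (R : Fin n → Fin n → Prop) [DecidableRel R] (i : Fin n) : ℕ := #{j | R i j}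

abbrev minor (R : Fin (n + 1) → Fin (n + 1) → Prop) (k c : Fin (n + 1)) : Fin n → Fin n → Prop :=
  fun i j => R (k.succAbove i) (c.succAbove j)

def permSuccAbove (k c : Fin (n + 1)) (τ : Equiv.Perm (Fin n)) : Equiv.Perm (Fin (n + 1)) :=
  (finSuccEquiv' k).trans ((Equiv.optionCongr τ).trans (finSuccEquiv' c).symm)

@[simp]
lemma permSuccAbove_apply_self (k c : Fin (n + 1)) (τ : Equiv.Perm (Fin n)) :
    permSuccAbove k c τ k = c := by
  simp [permSuccAbove]

@[simp]
lemma permSuccAbove_apply_succAbove (k c : Fin (n + 1)) (τ : Equiv.Perm (Fin n)) (i : Fin n) :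
    permSuccAbove k c τ (k.succAbove i) = c.succAbove (τ i) := by
  simp [permSuccAbove]

lemma permSuccAbove_injective (k c : Fin (n + 1)) : Function.Injective (permSuccAbove k c) :=
  fun τ τ' h => Equiv.ext fun i => by simpa using congr($h (k.succAbove i))

lemma exists_permSuccAbove_eq {k c : Fin (n + 1)} {σ : Equiv.Perm (Fin (n + 1))} (h : σ k = c) :
    ∃ τ, permSuccAbove k c τ = σ := by
  have hne (i : Fin n) : σ (k.succAbove i) ≠ c := h ▸ σ.injective.ne (Fin.succAbove_ne k i)
  choose f hf using fun i => Fin.exists_succAbove_eq (hne i)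
  have hf_inj : Function.Injective f := fun i i' h' => Fin.succAbove_right_injective
    (σ.injective (by rw [← hf, ← hf, h']))
  refine ⟨Equiv.ofBijective f hf_inj.bijective_of_finite, Equiv.ext fun i => ?_⟩
  cases i using Fin.succAboveCases k <;> simp [h, hf]

variable (R : Fin (n + 1) → Fin (n + 1) → Prop) [DecidableRel R]

lemma card_filter_transversals_apply_eq {k c : Fin (n + 1)} (h : R k c) :
    #{σ ∈ transversals R | σ k = c} = #(transversals (minor R k c)) := by
  symm
  refine card_bij (fun τ _ => permSuccAbove k c τ) (fun τ hτ => ?_)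
    (fun τ _ τ' _ => (permSuccAbove_injective k c ·)) (fun σ hσ => ?_)
  · simp only [transversals, mem_filter, mem_univ, true_and] at hτ ⊢
    refine ⟨fun i => ?_, permSuccAbove_apply_self k c τ⟩
    cases i using Fin.succAboveCases k <;> simp [h, hτ]
  · simp only [transversals, mem_filter, mem_univ, true_and] at hσ
    obtain ⟨τ, rfl⟩ := exists_permSuccAbove_eq hσ.2
    exact ⟨τ, by simpa [transversals] using fun i => hσ.1 (k.succAbove i), rfl⟩

lemma apply_mem_filter_of_mem_transversals (k : Fin (n + 1)) {σ : Equiv.Perm (Fin (n + 1))}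
    (hσ : σ ∈ transversals R) : σ k ∈ ({c | R k c} : Finset _) := by
  simp_all [transversals]

lemma card_transversals_eq_sum (k : Fin (n + 1)) :
    #(transversals R) = ∑ c ∈ {c | R k c}, #(transversals (minor R k c)) := by
  rw [card_eq_sum_card_fiberwise fun σ hσ => apply_mem_filter_of_mem_transversals R k hσ]
  exact sum_congr rfl fun c hc => card_filter_transversals_apply_eq R (by simpa using hc)

lemma prod_transversals_apply {M : Type*} [CommMonoid M] (k : Fin (n + 1))
    (F : Fin (n + 1) → M) :
    ∏ σ ∈ transversals R, F (σ k) = ∏ c ∈ {c | R k c}, F c ^ #(transversals (minor R k c)) := by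
  rw [← prod_fiberwise_of_maps_to fun σ hσ => apply_mem_filter_of_mem_transversals R k hσ]
  refine prod_congr rfl fun c hc => ?_
  rw [prod_congr rfl fun σ hσ => by rw [(mem_filter.mp hσ).2], prod_const,
    card_filter_transversals_apply_eq R (by simpa using hc)]

lemma rowDegree_minor (k c : Fin (n + 1)) (i : Fin n) :
    rowDegree (minor R k c) i =
      if R (k.succAbove i) c then rowDegree R (k.succAbove i) - 1
      else rowDegree R (k.succAbove i) := by
  have : ({j | R (k.succAbove i) (c.succAbove j)} : Finset (Fin n)).map c.succAboveEmb =
      ({j | R (k.succAbove i) j} : Finset _).erase c := by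
    ext j
    cases j using Fin.succAboveCases c <;> simp [Fin.succAbove_ne]
  rw [rowDegree, rowDegree, ← card_map, this, card_erase_eq_ite]
  simp

lemma card_transversals_pow_self_le (k : Fin (n + 1)) :
    (#(transversals R) : ℝ) ^ #(transversals R) ≤
      ∏ σ ∈ transversals R, (rowDegree R k * #(transversals (minor R k (σ k))) : ℝ) := by
  have h := Real.sum_rpow_sum_le {c | R k c}
    (t := fun c => (#(transversals (minor R k c)) : ℝ)) fun _ _ => by positivity
  simp only [← Nat.cast_sum, ← card_transversals_eq_sum, Real.rpow_natCast] at h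
  rwa [prod_mul_distrib, prod_const,
    prod_transversals_apply R k fun c => (#(transversals (minor R k c)) : ℝ)]

lemma prod_rowDegree_mul_card_transversals_minor_le
    (ih : ∀ k c, (#(transversals (minor R k c)) : ℝ) ≤
      ∏ i, bregmanFactor (rowDegree (minor R k c) i))
    {σ : Equiv.Perm (Fin (n + 1))} (hσ : σ ∈ transversals R) :
    ∏ k, (rowDegree R k * #(transversals (minor R k (σ k))) : ℝ) ≤
      ∏ k, bregmanFactor (rowDegree R k) ^ (n + 1) := by
  let g u c := bregmanFactor (if R u c then rowDegree R u - 1 else rowDegree R u)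
  have hminor (k c) : (#(transversals (minor R k c)) : ℝ) ≤ ∏ u ∈ univ.erase k, g u c := by
    refine (ih k c).trans_eq ?_
    simp only [rowDegree_minor]
    exact Fin.prod_succAbove_eq_prod_erase k fun u => g u c
  calc ∏ k, (rowDegree R k * #(transversals (minor R k (σ k))) : ℝ)
      ≤ ∏ k, (rowDegree R k * ∏ u ∈ univ.erase k, g u (σ k)) :=
        prod_le_prod (fun _ _ => by positivity) fun k _ =>
          mul_le_mul_of_nonneg_left (hminor k (σ k)) (by positivity)
    _ = ∏ u, (rowDegree R u * ∏ c ∈ univ.erase (σ u), g u c) := by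
        rw [prod_mul_distrib, prod_mul_distrib,
          prod_comm' (t' := univ) (s' := fun u => univ.erase u) (by simp [eq_comm])]
        congr 1
        exact prod_congr rfl fun u _ => prod_equiv σ (by simp) fun _ _ => rfl
    _ = ∏ u, bregmanFactor (rowDegree R u) ^ (n + 1) := by
        refine prod_congr rfl fun u _ => ?_
        have hu : σ u ∈ ({c | R u c} : Finset _) := apply_mem_filter_of_mem_transversals R u hσ
        simpa [g, rowDegree] using card_mul_prod_erase_bregmanFactor hu

end Transversals

theorem card_transversals_le_prod_bregmanFactor {n : ℕ} (R : Fin n → Fin n → Prop)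
    [DecidableRel R] : (#(transversals R) : ℝ) ≤ ∏ i, bregmanFactor (rowDegree R i) := by
  induction n with
  | zero => simp [transversals]
  | succ n ih =>
    set P := #(transversals R)
    set Q := ∏ i, bregmanFactor (rowDegree R i)
    have hQ : 0 ≤ Q := prod_nonneg fun i _ => bregmanFactor_nonneg _
    rcases P.eq_zero_or_pos with hP | hP
    · rwa [hP, Nat.cast_zero]
    have key : ((P : ℝ) ^ (n + 1)) ^ P ≤ (Q ^ (n + 1)) ^ P := calc
      ((P : ℝ) ^ (n + 1)) ^ P = ∏ _k : Fin (n + 1), (P : ℝ) ^ P := by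
        rw [prod_const, card_univ, Fintype.card_fin, ← pow_mul, ← pow_mul, mul_comm]
      _ ≤ ∏ k, ∏ σ ∈ transversals R, (rowDegree R k * #(transversals (minor R k (σ k))) : ℝ) :=
        prod_le_prod (fun _ _ => by positivity) fun k _ => card_transversals_pow_self_le R k
      _ = ∏ σ ∈ transversals R, ∏ k, (rowDegree R k * #(transversals (minor R k (σ k))) : ℝ) :=
        prod_comm
      _ ≤ ∏ σ ∈ transversals R, Q ^ (n + 1) := by
        refine prod_le_prod (fun _ _ => by positivity) fun σ hσ => ?_
        rw [← prod_pow]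
        exact prod_rowDegree_mul_card_transversals_minor_le R (fun k c => ih _) hσ
      _ = (Q ^ (n + 1)) ^ P := prod_const _
    exact le_of_pow_le_pow_left₀ n.succ_ne_zero hQ
      (le_of_pow_le_pow_left₀ hP.ne' (by positivity) key)

namespace SimpleGraph

variable {n : ℕ} {G : SimpleGraph (Fin n ⊕ Fin n)}

lemma degree_inl_eq_card [DecidableRel G.Adj] (hX : ∀ i j, ¬ G.Adj (Sum.inl i) (Sum.inl j))
    (i : Fin n) : G.degree (Sum.inl i) = #{j | G.Adj (Sum.inl i) (Sum.inr j)} := by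
  have : G.neighborFinset (Sum.inl i) =
      ({j | G.Adj (Sum.inl i) (Sum.inr j)} : Finset _).map Function.Embedding.inr := by
    ext w
    cases w <;> simp [hX]
  rw [← card_neighborFinset_eq_degree, this, card_map]

/-- The `n` vertices of `X` are matched injectively into `Y`, hence cover it, so every edge of a
perfect matching joins `X` to `Y`. -/
lemma Subgraph.IsPerfectMatching.exists_perm_edgeSet_eq {M : G.Subgraph}
    (hM : M.IsPerfectMatching) (hX : ∀ i j, ¬ G.Adj (Sum.inl i) (Sum.inl j)) :
    ∃ σ : Equiv.Perm (Fin n), M.edgeSet = Set.range fun i => s(Sum.inl i, Sum.inr (σ i)) := by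
  have hpartner (i : Fin n) : ∃ j, M.Adj (Sum.inl i) (Sum.inr j) := by
    obtain ⟨w, hw, -⟩ := Subgraph.isPerfectMatching_iff.mp hM (Sum.inl i)
    cases w with
    | inl j => exact absurd (M.adj_sub hw) (hX i j)
    | inr j => exact ⟨j, hw⟩
  choose p hp using hpartner
  have hp_inj : Function.Injective p := fun i i' h =>
    Sum.inl_injective (hM.1.eq_of_adj_right (hp i) (h ▸ hp i'))
  let σ := Equiv.ofBijective p hp_inj.bijective_of_finite
  have hσ (i : Fin n) : M.Adj (Sum.inl i) (Sum.inr (σ i)) := hp i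
  have hinr (j : Fin n) {w} (hw : M.Adj (Sum.inr j) w) : w = Sum.inl (σ.symm j) :=
    hM.1.eq_of_adj_left hw (by simpa using (hσ (σ.symm j)).symm)
  refine ⟨σ, Set.ext fun e => ?_⟩
  induction e using Sym2.ind with | h u v => ?_
  simp only [Subgraph.mem_edgeSet, Set.mem_range, Sym2.eq_iff]
  constructor
  · intro huv
    cases u with
    | inr j => exact ⟨σ.symm j, .inr ⟨(hinr j huv).symm, by simp⟩⟩
    | inl i =>
      cases v with
      | inl i' => exact absurd (M.adj_sub huv) (hX i i')
      | inr j => exact ⟨i, .inl ⟨rfl, hM.1.eq_of_adj_left (hσ i) huv⟩⟩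
  · rintro ⟨i, ⟨rfl, rfl⟩ | ⟨rfl, rfl⟩⟩
    · exact hσ i
    · exact (hσ i).symm

lemma natCard_perfectMatchings_le_card_transversals [DecidableRel G.Adj]
    (hX : ∀ i j, ¬ G.Adj (Sum.inl i) (Sum.inl j)) :
    Nat.card {M : G.Subgraph // M.IsPerfectMatching} ≤
      #(transversals fun i j => G.Adj (Sum.inl i) (Sum.inr j)) := by
  choose σ hσ using fun M : {M : G.Subgraph // M.IsPerfectMatching} =>
    M.2.exists_perm_edgeSet_eq hX
  have hmem (M) : σ M ∈ transversals fun i j => G.Adj (Sum.inl i) (Sum.inr j) := by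
    simp only [transversals, mem_filter, mem_univ, true_and]
    intro i
    have : s(Sum.inl i, Sum.inr (σ M i)) ∈ M.1.edgeSet := hσ M ▸ Set.mem_range_self i
    exact M.1.adj_sub this
  rw [← Nat.card_eq_finsetCard]
  refine Nat.card_le_card_of_injective (fun M => ⟨σ M, hmem M⟩) fun M M' h => ?_
  have hσM : σ M = σ M' := congrArg Subtype.val h
  exact Subtype.ext <| Subgraph.IsMatching.injOn_edgeSet M.2.1 M'.2.1 (by rw [hσ, hσ, hσM])

end SimpleGraph

theorem perfmat_le_prod_degree_factorial_rpow_bipartite_general {n : ℕ}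
    (G : SimpleGraph (Fin n ⊕ Fin n)) [DecidableRel G.Adj]
    (hX : ∀ i j, ¬ G.Adj (Sum.inl i) (Sum.inl j)) :
    (Nat.card {M : G.Subgraph // M.IsPerfectMatching} : ℝ) ≤
      ∏ i : Fin n, ((G.degree (Sum.inl i)).factorial : ℝ) ^
        (1 / (G.degree (Sum.inl i) : ℝ)) := by
  calc (Nat.card {M : G.Subgraph // M.IsPerfectMatching} : ℝ)
      ≤ #(transversals fun i j => G.Adj (Sum.inl i) (Sum.inr j)) := by
        exact_mod_cast SimpleGraph.natCard_perfectMatchings_le_card_transversals hX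
    _ ≤ ∏ i, bregmanFactor (rowDegree (fun i j => G.Adj (Sum.inl i) (Sum.inr j)) i) :=
        card_transversals_le_prod_bregmanFactor _
    _ = _ := by simp only [rowDegree, ← SimpleGraph.degree_inl_eq_card hX]; rfl

/-- For a bipartite simple graph `G` with parts `X, Y` of equal size `n` and
every vertex of `X` of positive degree, the number of perfect matchings of `G`
is at most `∏_{x ∈ X} (deg x)! ^ (1 / deg x)`. -/
theorem perfmat_le_prod_degree_factorial_rpow_bipartite {n : ℕ}
    (G : SimpleGraph (Fin n ⊕ Fin n)) [DecidableRel G.Adj]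
    (hX : ∀ i j, ¬ G.Adj (Sum.inl i) (Sum.inl j))
    (hY : ∀ i j, ¬ G.Adj (Sum.inr i) (Sum.inr j))
    (hdeg : ∀ i, 0 < G.degree (Sum.inl i)) :
    (Nat.card {M : G.Subgraph // M.IsPerfectMatching} : ℝ) ≤
      ∏ i : Fin n, ((G.degree (Sum.inl i)).factorial : ℝ) ^
        (1 / (G.degree (Sum.inl i) : ℝ)) :=
  perfmat_le_prod_degree_factorial_rpow_bipartite_general G hX
end
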